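/- arXiv:1003.2149 — 5 statements merged into one kernel-verified Lean document; each statement's English description precedes it below -/
import Mathlib

section
/- Let m ≥ 2. If the symbolic power I_G^{(m)} is a Cohen-Macaulay ideal, then G is connected and diam(G) ≤ 2. -/
open MvPolynomial

/-- The prime ideal `P_{ij}` of `S = k[x_1,…,x_n]` generated by all variables `x_t`
with `t ∉ {i,j}`. -/
noncomputable def varPrime (k : Type) [Field k] {n : ℕ} (i j : Fin n) :
    Ideal (MvPolynomial (Fin n) k) :=
  Ideal.span ((fun t => (X t : MvPolynomial (Fin n) k)) '' {t | t ≠ i ∧ t ≠ j})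

/-- The `m`-th symbolic power `I_G^{(m)} = ⋂_{{i,j} ∈ G} P_{ij}^m`; for `m = 1` this is
the ideal `I_G` itself. -/
noncomputable def symbolicPower (k : Type) [Field k] {n : ℕ} (G : SimpleGraph (Fin n))
    (m : ℕ) : Ideal (MvPolynomial (Fin n) k) :=
  ⨅ (i : Fin n) (j : Fin n) (_ : G.Adj i j), (varPrime k i j) ^ m

/-- An ideal `J` of the polynomial ring `S = k[x_1,…,x_n]` is Cohen-Macaulay
(i.e. `S/J` is a Cohen-Macaulay ring) iff there is a regular sequence on `S ⧸ J`
contained in the maximal graded ideal `(x_1,…,x_n)` whose length equals the Krull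
dimension of `S ⧸ J` (depth = dimension). -/
noncomputable def IsCohenMacaulayIdeal (k : Type) [Field k] {n : ℕ}
    (J : Ideal (MvPolynomial (Fin n) k)) : Prop :=
  ∃ rs : List (MvPolynomial (Fin n) k),
    (∀ r ∈ rs, r ∈ Ideal.span (Set.range (X : Fin n → MvPolynomial (Fin n) k))) ∧
    RingTheory.Sequence.IsRegular (MvPolynomial (Fin n) k ⧸ J) rs ∧
    (rs.length : WithBot (WithTop ℕ)) = ringKrullDim (MvPolynomial (Fin n) k ⧸ J)

/-!
Suppose `u, v` are at distance at least three, let `N` be the closed neighbourhood of `u`, and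
split the maximal ideal as `𝔪 = A + B` with `A = (x_t : t ∉ N)` and `B = (x_t : t ∈ N)`. No edge
meets both `u` and `v`, so for `f = x_u^{m-1} x_v^{m-1}` and edges `uw`, `vz` we get
`A f ⊆ P_{uw}^m`, `B f ⊆ P_{vz}^m` and `A B f ⊆ I_G^{(m)}`. Since `dim S/I_G^{(m)} ≥ 2`, the
Cohen-Macaulay property provides a regular sequence `r₁ = a₁ + b₁, r₂ = a₂ + b₂` in `𝔪`. Then
`r₂ a₁ f ≡ (a₁ b₂ - a₂ b₁) f ≡ 0` modulo `(I_G^{(m)}, r₁)`, so `a₁ f = j + c r₁` with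
`j ∈ I_G^{(m)}`. As `r₁` lies in no minimal prime `P_{ij}` and powers of monomial primes are
primary, `c ∈ P_{uw}^m` and `f - c ∈ P_{vz}^m`; but `f` has degree `m - 1` in the variables of
either prime, so `f ∉ P_{uw}^m + P_{vz}^m`.
-/

namespace MvPolynomial

section CommSemiring

variable {σ R : Type*} [CommSemiring R]

/- Substituting `x_t ↦ x_t Y^{w t}` lists the `w`-homogeneous components of `p` as the
coefficients of a polynomial in `Y`. For the indicator weight of `T`, membership in
`varIdeal R T ^ m` becomes divisibility by `Y ^ m`, and `Y` is prime. -/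
noncomputable def weightedComponents (w : σ → ℕ) :
    MvPolynomial σ R →ₐ[R] Polynomial (MvPolynomial σ R) :=
  aeval fun t => Polynomial.C (X t) * Polynomial.X ^ w t

theorem weightedComponents_monomial (w : σ → ℕ) (d : σ →₀ ℕ) (a : R) :
    weightedComponents w (monomial d a) =
      Polynomial.C (monomial d a) * Polynomial.X ^ Finsupp.weight w d := by
  rw [weightedComponents, aeval_monomial, Finsupp.weight_apply]
  simp only [mul_pow, ← pow_mul, Finsupp.prod_mul, ← map_pow]
  rw [Finsupp.prod, Finsupp.prod, Finsupp.sum, Finset.prod_pow_eq_pow_sum, ← map_prod,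
    monomial_eq]
  simp only [smul_eq_mul, mul_comm (d _), map_mul, Finsupp.prod, mul_assoc]
  rfl

theorem coeff_weightedComponents (w : σ → ℕ) (p : MvPolynomial σ R) (i : ℕ) :
    (weightedComponents w p).coeff i = weightedHomogeneousComponent w i p := by
  classical
  induction p using MvPolynomial.induction_on' with
  | monomial d a =>
    ext d'
    rw [weightedComponents_monomial, Polynomial.coeff_C_mul_X_pow,
      coeff_weightedHomogeneousComponent]
    by_cases hd : d = d'
    · subst hd
      split_ifs <;> simp_all [eq_comm]
    · split_ifs <;> simp [coeff_monomial, hd]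
  | add p q hp hq => simp [hp, hq]

theorem X_pow_dvd_weightedComponents_iff {w : σ → ℕ} {p : MvPolynomial σ R} {m : ℕ} :
    Polynomial.X ^ m ∣ weightedComponents w p ↔
      ∀ d, Finsupp.weight w d < m → coeff d p = 0 := by
  classical
  simp only [Polynomial.X_pow_dvd_iff, coeff_weightedComponents]
  refine ⟨fun h d hd => ?_, fun h i hi => ?_⟩
  · simpa [coeff_weightedHomogeneousComponent] using congrArg (coeff d) (h _ hd)
  · ext d
    rw [coeff_weightedHomogeneousComponent, coeff_zero]
    split_ifs with hd
    exacts [h d (hd ▸ hi), rfl]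

variable (R) in
noncomputable abbrev varIdeal (T : Set σ) : Ideal (MvPolynomial σ R) := Ideal.span (X '' T)

variable {T : Set σ} {m : ℕ}

theorem X_mem_varIdeal_iff [Nontrivial R] {t : σ} :
    (X t : MvPolynomial σ R) ∈ varIdeal R T ↔ t ∈ T := by
  classical
  simp [mem_ideal_span_X_image, support_X, Finsupp.single_apply]

theorem varIdeal_strictMono [Nontrivial R] : StrictMono (varIdeal (σ := σ) R) :=
  Monotone.strictMono_of_injective (fun _ _ h => Ideal.span_mono (Set.image_mono h))
    fun T T' h => Set.ext fun t => by rw [← X_mem_varIdeal_iff (R := R), h, X_mem_varIdeal_iff]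

theorem varIdeal_sup_varIdeal_compl (T : Set σ) :
    varIdeal R T ⊔ varIdeal R Tᶜ = idealOfVars σ R := by
  rw [← Ideal.span_union, ← Set.image_union, Set.union_compl_self, Set.image_univ]

theorem monomial_mem_varIdeal_pow (d : σ →₀ ℕ) (a : R) :
    monomial d a ∈ varIdeal R T ^ Finsupp.weight (T.indicator 1) d := by
  induction d using Finsupp.induction with
  | zero => simp
  | single_add t e d _ _ ih =>
    rw [monomial_single_add, map_add, Finsupp.weight_single, smul_eq_mul, pow_add]
    by_cases ht : t ∈ T
    · rw [Set.indicator_of_mem ht, Pi.one_apply, mul_one]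
      exact Ideal.mul_mem_mul
        (Ideal.pow_mem_pow (Ideal.subset_span (Set.mem_image_of_mem X ht)) e) ih
    · rw [Set.indicator_of_notMem ht, mul_zero, pow_zero, one_mul]
      exact Ideal.mul_mem_left _ _ ih

theorem mem_varIdeal_pow_iff_X_pow_dvd {p : MvPolynomial σ R} :
    p ∈ varIdeal R T ^ m ↔ Polynomial.X ^ m ∣ weightedComponents (T.indicator 1) p := by
  constructor
  · have hle : varIdeal R T ≤
        (Ideal.span {Polynomial.X}).comap (weightedComponents (T.indicator 1)) := by
      rw [Ideal.span_le]
      rintro - ⟨t, ht, rfl⟩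
      simp [weightedComponents, ht, Ideal.mem_span_singleton]
    intro hp
    have := Ideal.le_comap_pow _ m (Ideal.pow_right_mono hle m hp)
    rwa [Ideal.mem_comap, Ideal.span_singleton_pow, Ideal.mem_span_singleton] at this
  · intro h
    rw [p.as_sum]
    refine Ideal.sum_mem _ fun d hd => Ideal.pow_le_pow_right ?_ (monomial_mem_varIdeal_pow d _)
    by_contra! hlt
    exact mem_support_iff.mp hd (X_pow_dvd_weightedComponents_iff.mp h d hlt)

theorem mem_varIdeal_pow_iff {p : MvPolynomial σ R} :
    p ∈ varIdeal R T ^ m ↔ ∀ d, Finsupp.weight (T.indicator 1) d < m → coeff d p = 0 :=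
  mem_varIdeal_pow_iff_X_pow_dvd.trans X_pow_dvd_weightedComponents_iff

theorem X_pow_mul_X_pow_notMem_sup [Nontrivial R] {T' : Set σ} {u v : σ} {a b : ℕ}
    (hu : u ∉ T) (hv : v ∉ T') (ha : a < m) (hb : b < m) :
    X u ^ a * X v ^ b ∉ varIdeal R T ^ m ⊔ varIdeal R T' ^ m := by
  classical
  intro h
  obtain ⟨p, hp, q, hq, hpq⟩ := Submodule.mem_sup.mp h
  set d := Finsupp.single u a + Finsupp.single v b
  have hd : coeff d (X u ^ a * X v ^ b : MvPolynomial σ R) = 1 := by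
    rw [X_pow_eq_monomial, X_pow_eq_monomial, monomial_mul, one_mul, coeff_monomial, if_pos rfl]
  have hpd : coeff d p = 0 := mem_varIdeal_pow_iff.mp hp d <| by
    by_cases hv' : v ∈ T <;> simp [d, Finsupp.weight_single, hu, hv', hb, Nat.zero_lt_of_lt hb]
  have hqd : coeff d q = 0 := mem_varIdeal_pow_iff.mp hq d <| by
    by_cases hu' : u ∈ T' <;> simp [d, Finsupp.weight_single, hu', hv, ha, Nat.zero_lt_of_lt ha]
  rw [← hpq, coeff_add, hpd, hqd, add_zero] at hd
  exact zero_ne_one hd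

end CommSemiring

section IsDomain

variable {σ R : Type*} [CommRing R] [IsDomain R] {T : Set σ} {m : ℕ}

theorem mem_of_mul_mem_varIdeal_pow {c r : MvPolynomial σ R} (h : c * r ∈ varIdeal R T ^ m)
    (hr : r ∉ varIdeal R T) : c ∈ varIdeal R T ^ m := by
  rw [← pow_one (varIdeal R T), mem_varIdeal_pow_iff_X_pow_dvd, pow_one] at hr
  rw [mem_varIdeal_pow_iff_X_pow_dvd, map_mul] at h
  rw [mem_varIdeal_pow_iff_X_pow_dvd]
  exact Polynomial.prime_X.pow_dvd_of_dvd_mul_right m hr h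

theorem isPrime_varIdeal (T : Set σ) : (varIdeal R T).IsPrime := by
  refine ⟨(Ideal.ne_top_iff_one _).mpr fun h => ?_, fun {a b} hab => ?_⟩
  · rw [← pow_one (varIdeal R T), mem_varIdeal_pow_iff] at h
    simpa using h 0
  · by_contra! h
    rw [← pow_one (varIdeal R T)] at hab h
    exact h.2 (mem_of_mul_mem_varIdeal_pow (by rwa [mul_comm]) (by simpa using h.1))

end IsDomain

end MvPolynomial

section CommRing

variable {S : Type*} [CommRing S]

open scoped Pointwise in
theorem isSMulRegular_quotSMulTop_quotient_iff {J : Ideal S} {r r' : S} :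
    IsSMulRegular (QuotSMulTop r (S ⧸ J)) r' ↔
      ∀ s, r' * s ∈ J ⊔ Ideal.span {r} → s ∈ J ⊔ Ideal.span {r} := by
  have hmem : ∀ s : S, Ideal.Quotient.mk J s ∈ r • (⊤ : Submodule S (S ⧸ J)) ↔
      s ∈ J ⊔ Ideal.span {r} := by
    intro s
    rw [← Submodule.ideal_span_singleton_smul, Ideal.smul_top_eq_map,
      Submodule.restrictScalars_mem, Ideal.Quotient.algebraMap_eq, ← Ideal.mem_comap,
      Ideal.comap_map_of_surjective' _ Ideal.Quotient.mk_surjective, Ideal.mk_ker, sup_comm]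
  refine (isSMulRegular_quotient_iff_mem_of_smul_mem _ _).trans ?_
  simp only [Ideal.Quotient.mk_surjective.forall, Algebra.smul_def, Ideal.Quotient.algebraMap_eq,
    ← map_mul, hmem]

theorem two_le_ringKrullDim_quotient {J p₀ p₁ p₂ : Ideal S}
    [p₀.IsPrime] [p₁.IsPrime] [p₂.IsPrime] (hJ : J ≤ p₀) (h₀₁ : p₀ < p₁) (h₁₂ : p₁ < p₂) :
    2 ≤ ringKrullDim (S ⧸ J) := by
  let q (p : Ideal S) (hp : p.IsPrime) (hJp : J ≤ p) : PrimeSpectrum.zeroLocus (R := S) J :=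
    ⟨⟨p, hp⟩, hJp⟩
  rw [ringKrullDim_quotient]
  exact Order.LTSeries.length_le_krullDim <|
    ((RelSeries.singleton _ (q p₂ ‹_› (hJ.trans (h₀₁.trans h₁₂).le))).cons
      (q p₁ ‹_› (hJ.trans h₀₁.le)) h₁₂).cons (q p₀ ‹_› hJ) (by exact h₀₁)

theorem mem_sup_of_regular_pair {J A B P Q : Ideal S} {f r₁ r₂ : S}
    (hr₁ : r₁ ∈ A ⊔ B) (hr₂ : r₂ ∈ A ⊔ B) (hAB : ∀ a ∈ A, ∀ b ∈ B, a * b * f ∈ J)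
    (hAP : ∀ a ∈ A, a * f ∈ P) (hBQ : ∀ b ∈ B, b * f ∈ Q) (hJP : J ≤ P) (hJQ : J ≤ Q)
    (hP : ∀ c, c * r₁ ∈ P → c ∈ P) (hQ : ∀ c, c * r₁ ∈ Q → c ∈ Q)
    (hreg : ∀ s, r₂ * s ∈ J ⊔ Ideal.span {r₁} → s ∈ J ⊔ Ideal.span {r₁}) : f ∈ P ⊔ Q := by
  obtain ⟨a₁, ha₁, b₁, hb₁, rfl⟩ := Submodule.mem_sup.mp hr₁
  obtain ⟨a₂, ha₂, b₂, hb₂, rfl⟩ := Submodule.mem_sup.mp hr₂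
  have hmod : a₁ * f ∈ J ⊔ Ideal.span {a₁ + b₁} := by
    refine hreg _ ?_
    rw [show (a₂ + b₂) * (a₁ * f) = (a₁ * b₂ * f - a₂ * b₁ * f) + a₂ * f * (a₁ + b₁) by ring]
    exact add_mem (Ideal.mem_sup_left (sub_mem (hAB _ ha₁ _ hb₂) (hAB _ ha₂ _ hb₁)))
      (Ideal.mem_sup_right (Ideal.mul_mem_left _ _ (Ideal.mem_span_singleton_self _)))
  obtain ⟨j, hj, _, hc, hsum⟩ := Submodule.mem_sup.mp hmod
  obtain ⟨c, rfl⟩ := Ideal.mem_span_singleton'.mp hc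
  have hcP : c ∈ P := hP c <| by
    rw [show c * (a₁ + b₁) = a₁ * f - j by rw [← hsum]; ring]
    exact sub_mem (hAP _ ha₁) (hJP hj)
  have hfcQ : f - c ∈ Q := hQ _ <| by
    rw [show (f - c) * (a₁ + b₁) = b₁ * f + j by linear_combination -hsum]
    exact add_mem (hBQ _ hb₁) (hJQ hj)
  simpa using Submodule.add_mem_sup hcP hfcQ

end CommRing

def SimpleGraph.closedNeighborSet {V : Type*} (G : SimpleGraph V) (u : V) : Set V :=
  insert u (G.neighborSet u)

section SymbolicPower

variable {k : Type} [Field k] {n : ℕ}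

theorem exists_regular_pair_of_isCohenMacaulayIdeal {J : Ideal (MvPolynomial (Fin n) k)}
    (hJ : IsCohenMacaulayIdeal k J) (hdim : 2 ≤ ringKrullDim (MvPolynomial (Fin n) k ⧸ J)) :
    ∃ r₁ ∈ idealOfVars (Fin n) k, ∃ r₂ ∈ idealOfVars (Fin n) k,
      IsSMulRegular (MvPolynomial (Fin n) k ⧸ J) r₁ ∧
        IsSMulRegular (QuotSMulTop r₁ (MvPolynomial (Fin n) k ⧸ J)) r₂ := by
  obtain ⟨rs, hrs, hreg, hlen⟩ := hJ
  rw [← hlen] at hdim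
  match rs, hdim with
  | r₁ :: r₂ :: _, _ =>
    simp only [RingTheory.Sequence.isRegular_cons_iff] at hreg
    exact ⟨r₁, hrs _ (by simp), r₂, hrs _ (by simp), hreg.1, hreg.2.1⟩

variable {G : SimpleGraph (Fin n)} {m : ℕ}

theorem varPrime_eq_varIdeal (i j : Fin n) :
    varPrime k i j = varIdeal k {t | t ≠ i ∧ t ≠ j} := rfl

theorem varPrime_comm (i j : Fin n) : varPrime k i j = varPrime k j i := by
  simp only [varPrime_eq_varIdeal, and_comm]

theorem X_mem_varPrime_iff {i j t : Fin n} :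
    (X t : MvPolynomial (Fin n) k) ∈ varPrime k i j ↔ t ≠ i ∧ t ≠ j :=
  X_mem_varIdeal_iff

theorem mem_symbolicPower_iff {p : MvPolynomial (Fin n) k} :
    p ∈ symbolicPower k G m ↔ ∀ i j, G.Adj i j → p ∈ varPrime k i j ^ m := by
  simp [symbolicPower]

theorem symbolicPower_le_varPrime_pow {i j : Fin n} (hij : G.Adj i j) :
    symbolicPower k G m ≤ varPrime k i j ^ m :=
  fun _ hp => mem_symbolicPower_iff.mp hp i j hij

theorem two_le_ringKrullDim_quotient_symbolicPower (hm : m ≠ 0) {u w : Fin n}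
    (huw : G.Adj u w) : 2 ≤ ringKrullDim (MvPolynomial (Fin n) k ⧸ symbolicPower k G m) := by
  have : (varPrime k u w).IsPrime := isPrime_varIdeal {t | t ≠ u ∧ t ≠ w}
  have := isPrime_varIdeal (R := k) {u}ᶜ
  have := isPrime_varIdeal (R := k) (Set.univ : Set (Fin n))
  refine two_le_ringKrullDim_quotient (p₁ := varIdeal k {u}ᶜ) (p₂ := varIdeal k Set.univ)
    ((symbolicPower_le_varPrime_pow huw).trans (Ideal.pow_le_self hm))
    (varIdeal_strictMono ?_) (varIdeal_strictMono ?_)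
  · exact (Set.ssubset_iff_of_subset fun t ht => ht.1).mpr ⟨w, huw.ne.symm, by simp⟩
  · exact Set.ssubset_univ_iff.mpr (Set.compl_ne_univ.mpr (Set.singleton_nonempty u))

theorem notMem_varPrime_of_isSMulRegular {i j s : Fin n} {r : MvPolynomial (Fin n) k}
    (hij : G.Adj i j) (hsi : s ≠ i) (hsj : s ≠ j) (hm : m ≠ 0)
    (hr : IsSMulRegular (MvPolynomial (Fin n) k ⧸ symbolicPower k G m) r) :
    r ∉ varPrime k i j := by
  obtain ⟨m, rfl⟩ := Nat.exists_eq_succ_of_ne_zero hm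
  intro hri
  set g : MvPolynomial (Fin n) k := X i ^ (m + 1) * X j ^ (m + 1) * X s ^ m
  have hg : g ∉ varPrime k i j ^ (m + 1) := fun hg => by
    have := mem_varIdeal_pow_iff.mp hg
      (Finsupp.single i (m + 1) + Finsupp.single j (m + 1) + Finsupp.single s m)
      (by simp [Finsupp.weight_single, hsi, hsj])
    simp [g, X_pow_eq_monomial, monomial_mul, coeff_monomial] at this
  refine hg (symbolicPower_le_varPrime_pow hij (mem_of_isSMulRegular_quotient_of_smul_mem hr
    (mem_symbolicPower_iff.mpr fun i' j' hij' => ?_)))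
  by_cases hi : i ≠ i' ∧ i ≠ j'
  · rw [smul_eq_mul, show r * g = X i ^ (m + 1) * (r * X j ^ (m + 1) * X s ^ m) by ring]
    exact Ideal.mul_mem_right _ _ (Ideal.pow_mem_pow (X_mem_varPrime_iff.mpr hi) _)
  by_cases hj : j ≠ i' ∧ j ≠ j'
  · rw [smul_eq_mul, show r * g = X j ^ (m + 1) * (r * X i ^ (m + 1) * X s ^ m) by ring]
    exact Ideal.mul_mem_right _ _ (Ideal.pow_mem_pow (X_mem_varPrime_iff.mpr hj) _)
  have hedge : varPrime k i' j' = varPrime k i j := by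
    simp only [varPrime_eq_varIdeal]
    congr 2
    ext t
    grind [hij.ne]
  rw [hedge, smul_eq_mul, show r * g = X i ^ (m + 1) * X j ^ (m + 1) * (X s ^ m * r) by ring,
    pow_succ]
  exact Ideal.mul_mem_left _ _
    (Ideal.mul_mem_mul (Ideal.pow_mem_pow (X_mem_varPrime_iff.mpr ⟨hsi, hsj⟩) _) hri)

section FarApart

variable {u v : Fin n}

theorem varIdeal_compl_closedNeighborSet_le {w : Fin n} (hw : G.Adj u w) :
    varIdeal k (G.closedNeighborSet u)ᶜ ≤ varPrime k u w := by
  refine Ideal.span_mono (Set.image_mono fun t ht => ?_)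
  simp only [SimpleGraph.closedNeighborSet, Set.mem_compl_iff, Set.mem_insert_iff,
    SimpleGraph.mem_neighborSet, not_or] at ht
  exact ⟨ht.1, fun h => ht.2 (h ▸ hw)⟩

theorem varIdeal_closedNeighborSet_le (huv : 2 < G.edist u v) {z : Fin n} (hz : G.Adj v z) :
    varIdeal k (G.closedNeighborSet u) ≤ varPrime k v z := by
  obtain ⟨hne, hnadj, hcommon⟩ := SimpleGraph.two_lt_edist_iff.mp huv
  refine Ideal.span_mono (Set.image_mono fun t ht => ?_)
  have hnotcommon : t ∉ G.commonNeighbors u v := hcommon ▸ Set.notMem_empty t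
  simp only [SimpleGraph.closedNeighborSet, Set.mem_insert_iff,
    SimpleGraph.mem_neighborSet] at ht
  simp only [SimpleGraph.mem_commonNeighbors] at hnotcommon
  rcases ht with rfl | ht
  · exact ⟨hne, fun h => hnadj (h ▸ hz.symm)⟩
  · exact ⟨fun h => hnadj (h ▸ ht), fun h => hnotcommon ⟨ht, h ▸ hz⟩⟩

theorem mul_mem_varPrime_pow_of_adj_left (huv : 2 < G.edist u v) {w : Fin n} (hw : G.Adj u w)
    {a : MvPolynomial (Fin n) k} (ha : a ∈ varIdeal k (G.closedNeighborSet u)ᶜ) :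
    a * (X u ^ m * X v ^ m) ∈ varPrime k u w ^ (m + 1) := by
  obtain ⟨hne, hnadj, -⟩ := SimpleGraph.two_lt_edist_iff.mp huv
  have hv : v ∉ G.closedNeighborSet u := by
    simp [SimpleGraph.closedNeighborSet, hne.symm, hnadj]
  have hle := varIdeal_compl_closedNeighborSet_le (k := k) hw
  rw [show a * (X u ^ m * X v ^ m) = X u ^ m * (a * X v ^ m) by ring, pow_succ']
  exact Ideal.mul_mem_left _ _ (Ideal.mul_mem_mul (hle ha)
    (Ideal.pow_mem_pow (hle (Ideal.subset_span (Set.mem_image_of_mem X hv))) m))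

theorem mul_mem_varPrime_pow_of_adj_right (huv : 2 < G.edist u v) {z : Fin n} (hz : G.Adj v z)
    {b : MvPolynomial (Fin n) k} (hb : b ∈ varIdeal k (G.closedNeighborSet u)) :
    b * (X u ^ m * X v ^ m) ∈ varPrime k v z ^ (m + 1) := by
  have hle := varIdeal_closedNeighborSet_le (k := k) huv hz
  have hu : u ∈ G.closedNeighborSet u := Set.mem_insert u _
  rw [show b * (X u ^ m * X v ^ m) = X v ^ m * (b * X u ^ m) by ring, pow_succ']
  exact Ideal.mul_mem_left _ _ (Ideal.mul_mem_mul (hle hb)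
    (Ideal.pow_mem_pow (hle (Ideal.subset_span (Set.mem_image_of_mem X hu))) m))

theorem X_pow_mul_X_pow_mem_varPrime_pow (hm : 1 ≤ m) {i j : Fin n} (hu : u ≠ i ∧ u ≠ j)
    (hv : v ≠ i ∧ v ≠ j) : X u ^ m * X v ^ m ∈ varPrime k i j ^ (m + 1) := by
  rw [← mul_pow]
  refine Ideal.pow_le_pow_right (by omega : m + 1 ≤ 2 * m) ?_
  rw [pow_mul]
  exact Ideal.pow_mem_pow (pow_two (varPrime k i j) ▸
    Ideal.mul_mem_mul (X_mem_varPrime_iff.mpr hu) (X_mem_varPrime_iff.mpr hv)) m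

theorem mul_mul_mem_symbolicPower (hm : 1 ≤ m) (huv : 2 < G.edist u v)
    {a b : MvPolynomial (Fin n) k} (ha : a ∈ varIdeal k (G.closedNeighborSet u)ᶜ)
    (hb : b ∈ varIdeal k (G.closedNeighborSet u)) :
    a * b * (X u ^ m * X v ^ m) ∈ symbolicPower k G (m + 1) := by
  have hleft {w} (hw : G.Adj u w) :
      a * b * (X u ^ m * X v ^ m) ∈ varPrime k u w ^ (m + 1) := by
    rw [mul_right_comm]
    exact Ideal.mul_mem_right _ _ (mul_mem_varPrime_pow_of_adj_left huv hw ha)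
  have hright {z} (hz : G.Adj v z) :
      a * b * (X u ^ m * X v ^ m) ∈ varPrime k v z ^ (m + 1) := by
    rw [mul_assoc]
    exact Ideal.mul_mem_left _ _ (mul_mem_varPrime_pow_of_adj_right huv hz hb)
  refine mem_symbolicPower_iff.mpr fun i j hij => ?_
  rcases eq_or_ne i u with rfl | hiu
  · exact hleft hij
  rcases eq_or_ne j u with rfl | hju
  · rw [varPrime_comm]
    exact hleft hij.symm
  rcases eq_or_ne i v with rfl | hiv
  · exact hright hij
  rcases eq_or_ne j v with rfl | hjv
  · rw [varPrime_comm]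
    exact hright hij.symm
  exact Ideal.mul_mem_left _ _
    (X_pow_mul_X_pow_mem_varPrime_pow hm ⟨hiu.symm, hju.symm⟩ ⟨hiv.symm, hjv.symm⟩)

theorem not_isCohenMacaulayIdeal_symbolicPower (hG : ∀ v : Fin n, ∃ u : Fin n, G.Adj v u)
    (hm : 2 ≤ m) (huv : 2 < G.edist u v) : ¬ IsCohenMacaulayIdeal k (symbolicPower k G m) := by
  intro hCM
  obtain ⟨hne, hnadj, -⟩ := SimpleGraph.two_lt_edist_iff.mp huv
  obtain ⟨w, hw⟩ := hG u
  obtain ⟨z, hz⟩ := hG v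
  obtain ⟨m, rfl⟩ : ∃ m', m = m' + 1 := ⟨m - 1, by omega⟩
  obtain ⟨r₁, hr₁, r₂, hr₂, hreg₁, hreg₂⟩ := exists_regular_pair_of_isCohenMacaulayIdeal hCM
    (two_le_ringKrullDim_quotient_symbolicPower m.succ_ne_zero hw)
  have hr₁u : r₁ ∉ varPrime k u w := notMem_varPrime_of_isSMulRegular hw hne.symm
    (fun h => hnadj (h ▸ hw)) m.succ_ne_zero hreg₁
  have hr₁v : r₁ ∉ varPrime k v z := notMem_varPrime_of_isSMulRegular hz hne
    (fun h => hnadj (h ▸ hz.symm)) m.succ_ne_zero hreg₁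
  rw [← varIdeal_sup_varIdeal_compl (G.closedNeighborSet u), sup_comm] at hr₁ hr₂
  refine X_pow_mul_X_pow_notMem_sup (R := k) (u := u) (v := v) (T := {t | t ≠ u ∧ t ≠ w})
    (T' := {t | t ≠ v ∧ t ≠ z}) (by simp) (by simp) m.lt_succ_self m.lt_succ_self ?_
  exact mem_sup_of_regular_pair hr₁ hr₂
    (fun a ha b hb => mul_mul_mem_symbolicPower (by omega) huv ha hb)
    (fun a ha => mul_mem_varPrime_pow_of_adj_left huv hw ha)
    (fun b hb => mul_mem_varPrime_pow_of_adj_right huv hz hb)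
    (symbolicPower_le_varPrime_pow hw) (symbolicPower_le_varPrime_pow hz)
    (fun c hc => mem_of_mul_mem_varIdeal_pow hc hr₁u)
    (fun c hc => mem_of_mul_mem_varIdeal_pow hc hr₁v)
    (isSMulRegular_quotSMulTop_quotient_iff.mp hreg₂)

end FarApart

end SymbolicPower

/-- If `m ≥ 2` and the symbolic power `I_G^{(m)}` is Cohen-Macaulay, then `G` is
connected and `diam(G) ≤ 2`. -/
theorem stmt_0 (k : Type) [Field k] (n : ℕ) (hn : 3 ≤ n)
    (G : SimpleGraph (Fin n)) (hG : ∀ v : Fin n, ∃ u : Fin n, G.Adj v u)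
    (m : ℕ) (hm : 2 ≤ m)
    (hCM : IsCohenMacaulayIdeal k (symbolicPower k G m)) :
    G.Connected ∧ G.ediam ≤ 2 := by
  have : Nonempty (Fin n) := ⟨⟨0, by omega⟩⟩
  have hdiam : G.ediam ≤ 2 := SimpleGraph.ediam_le_of_edist_le fun u v => by
    by_contra! huv
    exact not_isCohenMacaulayIdeal_symbolicPower hG hm huv hCM
  exact ⟨G.connected_of_ediam_ne_top (ne_top_of_le_ne_top (by simp) hdiam), hdiam⟩
end

section
/- Let n ≥ 4. Then I_G^{(m)} = I_G^m holds for all m ≥ 1 if and only if n = 4 and G is a path, or a cycle, or the union of two disjoint edges. (Equivalently, for a pure (n-3)-dimensional simplicial complex Δ on n ≥ 4 vertices whose facet complements form the graph G, the vertex cover algebra A(Δ), i.e. the symbolic Rees algebra of I_G, is a standard graded S-algebra if and only if n = 4 and G is a path, a cycle, or the union of two disjoint edges.) -/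
/-!
Both `I_G^{(m)}` and `I_G^m` are monomial ideals: `x^d` lies in `I_G^{(m)}` iff the degree of `d`
outside every edge of `G` is at least `m` (`d` is an `m`-cover), and in `I_G^m` iff `d` is a sum of
`m` such `1`-covers. So the equality for all `m` says that every `m`-cover splits into `m`
`1`-covers.

For `n ≥ 5` the all-ones vector is an `(n - 2)`-cover of degree `n`, whereas without isolated
vertices every `1`-cover has degree at least `2`. For `n = 4` the complement of an edge is again an
edge, so `m`-covers of `G` are the vertex covers of order `m` of the graph of opposite edges. Those
of a bipartite graph split (peel off one vertex cover at a time), while a triangle `xyz` gives a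
`2`-cover, equal to `1` on the triangle, that does not. On four vertices triangle-free graphs are
bipartite, and a finite check shows that, without isolated vertices, the opposite graph is
triangle-free exactly for the path, the cycle and two disjoint edges.
-/

open MvPolynomial

/-- `G` is a path: its edges form a Hamiltonian path on the `n` vertices. -/
def IsPathGraph {n : ℕ} (G : SimpleGraph (Fin n)) : Prop :=
  ∃ f : Fin n ≃ Fin n, ∀ i j : Fin n,
    G.Adj (f i) (f j) ↔ (i.val + 1 = j.val ∨ j.val + 1 = i.val)

/-- `G` is a cycle: its edges form a Hamiltonian cycle on the `n` vertices. -/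
def IsCycleGraph {n : ℕ} (G : SimpleGraph (Fin n)) : Prop :=
  ∃ f : Fin n ≃ Fin n, ∀ i j : Fin n,
    G.Adj (f i) (f j) ↔ ((i.val + 1) % n = j.val ∨ (j.val + 1) % n = i.val)

/-- `G` is the union of two disjoint edges: `n = 4` and `G` consists of exactly two
edges with no common vertex. -/
def IsTwoDisjointEdges {n : ℕ} (G : SimpleGraph (Fin n)) : Prop :=
  n = 4 ∧ ∃ a b c d : Fin n, a ≠ b ∧ a ≠ c ∧ a ≠ d ∧ b ≠ c ∧ b ≠ d ∧ c ≠ d ∧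
    ∀ u v : Fin n, G.Adj u v ↔
      ((u = a ∧ v = b) ∨ (u = b ∧ v = a) ∨ (u = c ∧ v = d) ∨ (u = d ∧ v = c))

open scoped Pointwise

namespace Finsupp

variable {σ : Type*}

theorem exists_degree_eq_support_subset_le_iff (s : Set σ) [DecidablePred (· ∈ s)]
    (d : σ →₀ ℕ) (m : ℕ) :
    (∃ e : σ →₀ ℕ, (e.degree = m ∧ ↑e.support ⊆ s) ∧ e ≤ d) ↔
      m ≤ (d.filter (· ∈ s)).degree := by
  constructor
  · rintro ⟨e, ⟨rfl, hes⟩, hed⟩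
    refine degree_mono fun t => ?_
    by_cases ht : t ∈ s
    · simpa [ht] using hed t
    · simp [ht, notMem_support_iff.mp fun h => ht (hes h)]
  · intro h
    obtain ⟨e, hed, rfl⟩ := exists_le_degree_eq _ _ h
    refine ⟨e, ⟨rfl, fun t ht => ?_⟩, hed.trans fun t => ?_⟩
    · have := support_mono hed ht
      simp only [support_filter, Finset.mem_filter] at this
      exact this.2
    · by_cases t ∈ s <;> simp [*]

theorem degree_filter_add_add [DecidableEq σ] (d : σ →₀ ℕ) {i j : σ} (hij : i ≠ j) :
    (d.filter fun t => t ≠ i ∧ t ≠ j).degree + d i + d j = d.degree := by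
  have hpair : d.filter (fun t => ¬(t ≠ i ∧ t ≠ j)) = single i (d i) + single j (d j) := by
    ext t
    by_cases hti : t = i <;> by_cases htj : t = j <;> simp_all
  have h := congrArg degree (filter_add_filter_not d fun t => t ≠ i ∧ t ≠ j)
  rw [map_add, hpair, map_add, degree_single, degree_single] at h
  omega

end Finsupp

namespace MvPolynomial

variable {σ R : Type*} [CommSemiring R]

theorem span_X_image_pow (s : Set σ) (m : ℕ) :
    Ideal.span (X '' s : Set (MvPolynomial σ R)) ^ m =
      Ideal.span ((monomial · 1) '' {e : σ →₀ ℕ | e.degree = m ∧ ↑e.support ⊆ s}) := by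
  rw [Ideal.span, Submodule.span_pow, Finsupp.image_pow_eq_finsuppProd_image]
  simp [monomial_eq]

theorem mem_span_X_image_pow_iff (s : Set σ) [DecidablePred (· ∈ s)] (m : ℕ)
    (f : MvPolynomial σ R) :
    f ∈ Ideal.span (X '' s) ^ m ↔ ∀ d ∈ f.support, m ≤ (d.filter (· ∈ s)).degree := by
  simp only [span_X_image_pow, mem_ideal_span_monomial_image, Set.mem_ofPred_eq,
    Finsupp.exists_degree_eq_support_subset_le_iff]

theorem restrictSupport_inj [Nontrivial R] {s t : Set (σ →₀ ℕ)} :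
    restrictSupport R s = restrictSupport R t ↔ s = t := by
  refine ⟨fun h => Set.ext fun d => ?_, congrArg _⟩
  simpa using congr(monomial d (1 : R) ∈ $h)

end MvPolynomial

theorem Fin.sum_univ_four_of_ne {M : Type*} [AddCommMonoid M] (f : Fin 4 → M)
    {i j k l : Fin 4} (hij : i ≠ j) (hik : i ≠ k) (hil : i ≠ l) (hjk : j ≠ k) (hjl : j ≠ l)
    (hkl : k ≠ l) : ∑ t, f t = f i + f j + f k + f l := by
  have huniv : ({i, j, k, l} : Finset (Fin 4)) = Finset.univ :=
    Finset.eq_univ_of_card _ (by simp [Finset.card_insert_of_notMem, *])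
  rw [← huniv, Finset.sum_insert (by simp [*]), Finset.sum_insert (by simp [*]),
    Finset.sum_pair hkl, add_assoc, add_assoc]

namespace SimpleGraph

section EdgeComplementCovers

variable {σ : Type*} (G : SimpleGraph σ)

/-- The exponents `d` of the monomials of `I_G^{(m)}`: `m + d i + d j ≤ |d|` says that the degree
of `d` outside the edge `{i, j}` is at least `m`. -/
def edgeComplementCovers (m : ℕ) : Set (σ →₀ ℕ) :=
  {d | ∀ i j, G.Adj i j → m + d i + d j ≤ d.degree}

variable {G}

theorem add_le_degree_of_adj (d : σ →₀ ℕ) {i j : σ} (h : G.Adj i j) :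
    d i + d j ≤ d.degree := by
  classical
  have := d.degree_filter_add_add h.ne
  omega

theorem isUpperSet_edgeComplementCovers (m : ℕ) : IsUpperSet (G.edgeComplementCovers m) := by
  intro d e hde hd i j hij
  obtain ⟨r, rfl⟩ := le_iff_exists_add.mp hde
  have := hd i j hij
  have := add_le_degree_of_adj r hij
  simp only [Finsupp.coe_add, Pi.add_apply, map_add]
  omega

theorem edgeComplementCovers_add_subset (a b : ℕ) :
    G.edgeComplementCovers a + G.edgeComplementCovers b ⊆ G.edgeComplementCovers (a + b) := by
  rintro _ ⟨d, hd, e, he, rfl⟩ i j hij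
  have := hd i j hij
  have := he i j hij
  simp only [Finsupp.coe_add, Pi.add_apply, map_add]
  omega

theorem nsmul_edgeComplementCovers_one_subset (m : ℕ) :
    m • G.edgeComplementCovers 1 ⊆ G.edgeComplementCovers m := by
  induction m with
  | zero =>
    rintro _ rfl i j hij
    simp
  | succ m ih =>
    rw [succ_nsmul]
    exact (Set.add_subset_add ih le_rfl).trans (edgeComplementCovers_add_subset m 1)

theorem two_le_degree_of_mem_edgeComplementCovers_one [Nonempty σ]
    (hG : ∀ v, ∃ u, G.Adj v u) {d : σ →₀ ℕ} (hd : d ∈ G.edgeComplementCovers 1) :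
    2 ≤ d.degree := by
  obtain ⟨u, hu⟩ := hG (Classical.arbitrary σ)
  obtain ⟨t, ht⟩ : d.support.Nonempty := by
    rw [Finset.nonempty_iff_ne_empty, Ne, Finsupp.support_eq_empty]
    rintro rfl
    simpa using hd _ _ hu
  obtain ⟨v, hv⟩ := hG t
  have := hd t v hv
  have := Finsupp.mem_support_iff.mp ht
  omega

theorem two_mul_le_degree_of_mem_nsmul [Nonempty σ] (hG : ∀ v, ∃ u, G.Adj v u) {m : ℕ}
    {d : σ →₀ ℕ} (hd : d ∈ m • G.edgeComplementCovers 1) : 2 * m ≤ d.degree := by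
  induction m generalizing d with
  | zero => simp
  | succ m ih =>
    rw [succ_nsmul] at hd
    obtain ⟨d, hd, e, he, rfl⟩ := hd
    have := ih hd
    have := two_le_degree_of_mem_edgeComplementCovers_one hG he
    rw [map_add]
    omega

theorem not_edgeComplementCovers_subset_nsmul [Fintype σ] (hσ : 5 ≤ Fintype.card σ)
    (hG : ∀ v, ∃ u, G.Adj v u) :
    ¬ G.edgeComplementCovers (Fintype.card σ - 2) ⊆
      (Fintype.card σ - 2) • G.edgeComplementCovers 1 := by
  have : Nonempty σ := Fintype.card_pos_iff.mp (by omega)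
  let ones : σ →₀ ℕ := Finsupp.equivFunOnFinite.symm 1
  have hdeg : ones.degree = Fintype.card σ := by simp [ones, Finsupp.degree_eq_sum]
  intro h
  have := two_mul_le_degree_of_mem_nsmul hG <| h fun i j _ => by
    rw [hdeg]
    simp only [ones, Finsupp.coe_equivFunOnFinite_symm, Pi.one_apply]
    omega
  omega

end EdgeComplementCovers

section VertexCoversOfOrder

variable {α : Type*} (H : SimpleGraph α)

def vertexCoversOfOrder (m : ℕ) : Set (α →₀ ℕ) := {d | ∀ u v, H.Adj u v → m ≤ d u + d v}

variable {H}

theorem exists_vertexCover_le_sub_mem {s t : Set α} (h : H.IsBipartiteWith s t) {m : ℕ}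
    {a : α →₀ ℕ} (ha : a ∈ H.vertexCoversOfOrder (m + 1)) :
    ∃ c ∈ H.vertexCoversOfOrder 1, c ≤ a ∧ a - c ∈ H.vertexCoversOfOrder m := by
  classical
  -- `c` takes a vertex of `s` whenever possible, and a vertex outside `s` only if it covers
  -- every edge at it `m + 1` times on its own.
  let θ : α → ℕ := fun u => if u ∈ s then 1 else m + 1
  have hθ : ∀ u, 1 ≤ θ u := fun u => by simp only [θ]; split_ifs <;> omega
  let c : α →₀ ℕ := Finsupp.onFinset a.support (fun u => if θ u ≤ a u then 1 else 0) <| by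
    intro u hu
    have := hθ u
    simp only [ne_eq, ite_eq_right_iff, one_ne_zero, imp_false, not_le] at hu
    simp only [Finsupp.mem_support_iff]
    omega
  have hc : ∀ u, c u = if θ u ≤ a u then 1 else 0 := fun u => rfl
  have key : ∀ u v, H.Adj u v → u ∈ s → 1 ≤ c u + c v ∧ m ≤ (a - c) u + (a - c) v := by
    intro u v huv hu
    have hv : v ∉ s := Set.disjoint_right.mp h.disjoint (h.mem_of_mem_adj hu huv)
    have := ha u v huv
    simp only [hc, θ, hu, hv, if_true, if_false, Finsupp.tsub_apply]
    split_ifs <;> omega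
  refine ⟨c, fun u v huv => ?_, fun u => ?_, fun u v huv => ?_⟩
  · rcases h.mem_of_adj huv with ⟨hu, -⟩ | ⟨-, hv⟩
    · exact (key u v huv hu).1
    · rw [add_comm]; exact (key v u huv.symm hv).1
  · have := hθ u
    rw [hc]
    split_ifs <;> omega
  · rcases h.mem_of_adj huv with ⟨hu, -⟩ | ⟨-, hv⟩
    · exact (key u v huv hu).2
    · rw [add_comm]; exact (key v u huv.symm hv).2

theorem vertexCoversOfOrder_subset_nsmul (hH : H.IsBipartite) {m : ℕ} (hm : m ≠ 0) :
    H.vertexCoversOfOrder m ⊆ m • H.vertexCoversOfOrder 1 := by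
  obtain ⟨s, t, h⟩ := isBipartite_iff_exists_isBipartiteWith.mp hH
  induction m, Nat.one_le_iff_ne_zero.mpr hm using Nat.le_induction with
  | base => rw [one_nsmul]
  | succ m hm ih =>
    intro a ha
    obtain ⟨c, hc, hca, hac⟩ := exists_vertexCover_le_sub_mem h ha
    rw [succ_nsmul]
    exact ⟨a - c, ih (by omega) hac, c, hc, tsub_add_cancel_of_le hca⟩

theorem cliqueFree_three_iff :
    H.CliqueFree 3 ↔ ∀ x y z, H.Adj x y → H.Adj x z → ¬H.Adj y z := by
  classical
  simp only [CliqueFree, is3Clique_iff]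
  grind

theorem not_vertexCoversOfOrder_two_subset [Finite α] (hH : ¬H.CliqueFree 3) :
    ¬ H.vertexCoversOfOrder 2 ⊆ 2 • H.vertexCoversOfOrder 1 := by
  classical
  obtain ⟨x, y, z, hxy, hxz, hyz⟩ : ∃ x y z, H.Adj x y ∧ H.Adj x z ∧ H.Adj y z := by
    simpa [cliqueFree_three_iff] using hH
  let a : α →₀ ℕ :=
    Finsupp.equivFunOnFinite.symm fun u => if u = x ∨ u = y ∨ u = z then 1 else 2
  have ha : ∀ u, 1 ≤ a u := fun u => by
    simp only [a, Finsupp.coe_equivFunOnFinite_symm]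
    split_ifs <;> omega
  intro h
  have h2 : a ∈ 2 • H.vertexCoversOfOrder 1 := h fun u v _ => by
    have := ha u; have := ha v; omega
  rw [two_nsmul] at h2
  obtain ⟨c, hc, c', hc', hcc'⟩ := h2
  have hx := congr($hcc' x)
  have hy := congr($hcc' y)
  have hz := congr($hcc' z)
  simp only [Finsupp.coe_add, Pi.add_apply, a, Finsupp.coe_equivFunOnFinite_symm, true_or,
    or_true, ↓reduceIte] at hx hy hz
  have := hc x y hxy; have := hc y z hyz; have := hc x z hxz
  have := hc' x y hxy; have := hc' y z hyz; have := hc' x z hxz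
  omega

end VertexCoversOfOrder

section FinFour

/-- On four vertices the pairs `{k, l}` disjoint from an edge `{i, j}` are exactly its complement,
the opposite edge. -/
def oppositeGraph (G : SimpleGraph (Fin 4)) : SimpleGraph (Fin 4) where
  Adj k l := k ≠ l ∧ ∃ i j, G.Adj i j ∧ i ≠ k ∧ i ≠ l ∧ j ≠ k ∧ j ≠ l
  symm := ⟨fun _ _ ⟨hkl, i, j, hij, hik, hil, hjk, hjl⟩ =>
    ⟨hkl.symm, i, j, hij, hil, hik, hjl, hjk⟩⟩
  loopless := ⟨fun _ h => h.1 rfl⟩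

instance (G : SimpleGraph (Fin 4)) [DecidableRel G.Adj] : DecidableRel G.oppositeGraph.Adj :=
  fun k l => inferInstanceAs (Decidable (k ≠ l ∧ ∃ i j, G.Adj i j ∧ i ≠ k ∧ i ≠ l ∧ j ≠ k ∧ j ≠ l))

theorem edgeComplementCovers_eq_vertexCoversOfOrder (G : SimpleGraph (Fin 4)) (m : ℕ) :
    G.edgeComplementCovers m = G.oppositeGraph.vertexCoversOfOrder m := by
  have exists_opposite : ∀ i j : Fin 4, i ≠ j →
      ∃ k l : Fin 4, i ≠ k ∧ i ≠ l ∧ j ≠ k ∧ j ≠ l ∧ k ≠ l := by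
    decide
  ext d
  simp only [edgeComplementCovers, vertexCoversOfOrder, Set.mem_ofPred_eq,
    Finsupp.degree_eq_sum]
  constructor
  · rintro hd k l ⟨hkl, i, j, hij, hik, hil, hjk, hjl⟩
    have := hd i j hij
    rw [Fin.sum_univ_four_of_ne d hij.ne hik hil hjk hjl hkl] at this
    omega
  · intro hd i j hij
    obtain ⟨k, l, hik, hil, hjk, hjl, hkl⟩ := exists_opposite i j hij.ne
    have := hd k l ⟨hkl, i, j, hij, hik, hil, hjk, hjl⟩
    rw [Fin.sum_univ_four_of_ne d hij.ne hik hil hjk hjl hkl]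
    omega

/-- The graph on `Fin 4` with the six adjacency bits `01, 02, 03, 12, 13, 23`. Every graph on
`Fin 4` is of this form, which turns statements about all of them into a kernel computation. -/
def ofBools (a b c d e f : Bool) : SimpleGraph (Fin 4) :=
  SimpleGraph.fromRel fun i j =>
    ![![false, a, b, c], ![false, false, d, e], ![false, false, false, f],
      ![false, false, false, false]] i j = true

instance (a b c d e f : Bool) : DecidableRel (ofBools a b c d e f).Adj :=
  fun i j => inferInstanceAs (Decidable (i ≠ j ∧ (_ ∨ _)))

theorem exists_eq_ofBools (G : SimpleGraph (Fin 4)) :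
    ∃ a b c d e f, G = ofBools a b c d e f := by
  classical
  refine ⟨G.Adj 0 1, G.Adj 0 2, G.Adj 0 3, G.Adj 1 2, G.Adj 1 3, G.Adj 2 3, ?_⟩
  ext i j
  fin_cases i <;> fin_cases j <;> simp [ofBools] <;> exact G.adj_comm _ _

theorem ofBools_exists_bipartition : ∀ a b c d e f : Bool,
    (∀ x y z, (ofBools a b c d e f).Adj x y → (ofBools a b c d e f).Adj x z →
      ¬(ofBools a b c d e f).Adj y z) →
    ∃ s : Finset (Fin 4), ∀ u v, (ofBools a b c d e f).Adj u v → (u ∈ s ↔ v ∉ s) := by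
  decide +kernel

theorem isBipartite_of_cliqueFree_three {H : SimpleGraph (Fin 4)} (hH : H.CliqueFree 3) :
    H.IsBipartite := by
  obtain ⟨a, b, c, d, e, f, rfl⟩ := exists_eq_ofBools H
  obtain ⟨s, hs⟩ := ofBools_exists_bipartition a b c d e f (cliqueFree_three_iff.mp hH)
  refine IsBipartiteWith.isBipartite (s := ↑s) (t := (↑s)ᶜ) ⟨disjoint_compl_right, ?_⟩
  intro u v huv
  have := hs u v huv
  simp only [Finset.mem_coe, Set.mem_compl_iff]
  tauto

instance {n : ℕ} (G : SimpleGraph (Fin n)) [DecidableRel G.Adj] : Decidable (IsPathGraph G) :=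
  inferInstanceAs (Decidable (∃ _ : Fin n ≃ Fin n, _))

instance {n : ℕ} (G : SimpleGraph (Fin n)) [DecidableRel G.Adj] : Decidable (IsCycleGraph G) :=
  inferInstanceAs (Decidable (∃ _ : Fin n ≃ Fin n, _))

instance {n : ℕ} (G : SimpleGraph (Fin n)) [DecidableRel G.Adj] :
    Decidable (IsTwoDisjointEdges G) :=
  inferInstanceAs (Decidable (_ ∧ _))

theorem ofBools_oppositeGraph_triangleFree_iff : ∀ a b c d e f : Bool,
    (∀ v, ∃ u, (ofBools a b c d e f).Adj v u) →
    ((∀ x y z, (ofBools a b c d e f).oppositeGraph.Adj x y →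
        (ofBools a b c d e f).oppositeGraph.Adj x z → ¬(ofBools a b c d e f).oppositeGraph.Adj y z) ↔
      IsPathGraph (ofBools a b c d e f) ∨ IsCycleGraph (ofBools a b c d e f) ∨
        IsTwoDisjointEdges (ofBools a b c d e f)) := by
  decide +kernel

theorem oppositeGraph_cliqueFree_three_iff {G : SimpleGraph (Fin 4)} (hG : ∀ v, ∃ u, G.Adj v u) :
    G.oppositeGraph.CliqueFree 3 ↔ IsPathGraph G ∨ IsCycleGraph G ∨ IsTwoDisjointEdges G := by
  obtain ⟨a, b, c, d, e, f, rfl⟩ := exists_eq_ofBools G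
  rw [cliqueFree_three_iff]
  exact ofBools_oppositeGraph_triangleFree_iff a b c d e f hG

theorem forall_edgeComplementCovers_eq_nsmul_iff (G : SimpleGraph (Fin 4)) :
    (∀ m, 1 ≤ m → G.edgeComplementCovers m = m • G.edgeComplementCovers 1) ↔
      G.oppositeGraph.CliqueFree 3 := by
  simp only [edgeComplementCovers_eq_vertexCoversOfOrder]
  refine ⟨fun h => ?_, fun hG m hm => ?_⟩
  · by_contra hG
    exact not_vertexCoversOfOrder_two_subset hG (h 2 le_add_self).subset
  · refine subset_antisymm (vertexCoversOfOrder_subset_nsmul ?_ (by omega)) ?_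
    · exact isBipartite_of_cliqueFree_three hG
    · simpa only [edgeComplementCovers_eq_vertexCoversOfOrder] using
        nsmul_edgeComplementCovers_one_subset (G := G) m

end FinFour

end SimpleGraph

open MvPolynomial

theorem mem_symbolicPower_iff_s9 {k : Type} [Field k] {n : ℕ} {G : SimpleGraph (Fin n)} {m : ℕ}
    {f : MvPolynomial (Fin n) k} :
    f ∈ symbolicPower k G m ↔ ↑f.support ⊆ G.edgeComplementCovers m := by
  simp only [symbolicPower, varPrime, Ideal.mem_iInf, mem_span_X_image_pow_iff,
    Set.mem_ofPred_eq]
  refine ⟨fun h d hd i j hij => ?_, fun h i j hij d hd => ?_⟩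
  · have := d.degree_filter_add_add hij.ne
    have := h i j hij d hd
    omega
  · have := d.degree_filter_add_add hij.ne
    have := h hd i j hij
    omega

theorem symbolicPower_eq_restrictSupportIdeal (k : Type) [Field k] {n : ℕ}
    (G : SimpleGraph (Fin n)) (m : ℕ) :
    symbolicPower k G m = restrictSupportIdeal _ _ (G.isUpperSet_edgeComplementCovers m) := by
  ext f
  exact mem_symbolicPower_iff_s9

theorem symbolicPower_eq_pow_iff {k : Type} [Field k] {n : ℕ} {G : SimpleGraph (Fin n)}
    {m : ℕ} (hm : m ≠ 0) :
    symbolicPower k G m = symbolicPower k G 1 ^ m ↔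
      G.edgeComplementCovers m = m • G.edgeComplementCovers 1 := by
  rw [symbolicPower_eq_restrictSupportIdeal, symbolicPower_eq_restrictSupportIdeal,
    ← Submodule.restrictScalars_inj k, Submodule.restrictScalars_pow hm,
    restrictScalars_restrictSupportIdeal, restrictScalars_restrictSupportIdeal,
    ← restrictSupport_nsmul, restrictSupport_inj]

/-- Let `n ≥ 4`. Then `I_G^{(m)} = I_G^m` holds for all `m ≥ 1` (equivalently, the
vertex cover algebra / symbolic Rees algebra of `I_G` is standard graded) if and only
if `n = 4` and `G` is a path, or a cycle, or the union of two disjoint edges. -/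
theorem stmt_9 (k : Type) [Field k] (n : ℕ) (hn : 4 ≤ n)
    (G : SimpleGraph (Fin n)) (hG : ∀ v : Fin n, ∃ u : Fin n, G.Adj v u) :
    (∀ m : ℕ, 1 ≤ m → symbolicPower k G m = (symbolicPower k G 1) ^ m) ↔
      n = 4 ∧ (IsPathGraph G ∨ IsCycleGraph G ∨ IsTwoDisjointEdges G) := by
  rw [forall₂_congr fun m (hm : 1 ≤ m) => symbolicPower_eq_pow_iff (k := k) (G := G) (by omega)]
  constructor
  · intro h
    obtain rfl : n = 4 := by
      by_contra hn4
      have := G.not_edgeComplementCovers_subset_nsmul (by simp; omega) hG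
      rw [Fintype.card_fin] at this
      exact this (h _ (by omega)).subset
    exact ⟨rfl, (SimpleGraph.oppositeGraph_cliqueFree_three_iff hG).mp
      ((G.forall_edgeComplementCovers_eq_nsmul_iff).mp h)⟩
  · rintro ⟨rfl, hG4⟩
    exact G.forall_edgeComplementCovers_eq_nsmul_iff.mpr
      ((SimpleGraph.oppositeGraph_cliqueFree_three_iff hG).mpr hG4)
end

section
/- Let I be a monomial ideal of S = k[x_1,…,x_n] and let a ∈ ℤ^n. Then Δ_a(I) is a subcomplex of Δ(I), i.e. every face of Δ_a(I) is a face of Δ(I). -/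
open MvPolynomial

/-- `I` is a monomial ideal: it is generated by a set of monomials `x^b`. -/
def IsMonomialIdeal (k : Type) [Field k] {n : ℕ} (I : Ideal (MvPolynomial (Fin n) k)) :
    Prop :=
  ∃ B : Set (Fin n →₀ ℕ),
    I = Ideal.span ((fun b => (monomial b (1 : k) : MvPolynomial (Fin n) k)) '' B)

/-- `x^b` is a minimal monomial generator of the monomial ideal `I`: `x^b ∈ I` and no
proper monomial divisor of `x^b` lies in `I`. -/
def IsMinimalGenerator (k : Type) [Field k] {n : ℕ}
    (I : Ideal (MvPolynomial (Fin n) k)) (b : Fin n →₀ ℕ) : Prop :=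
  (monomial b (1 : k) : MvPolynomial (Fin n) k) ∈ I ∧
    ∀ c : Fin n →₀ ℕ, c ≤ b → (monomial c (1 : k) : MvPolynomial (Fin n) k) ∈ I → c = b

/-- The simplicial complex `Δ(I)` of all `F` with `∏_{i ∈ F} x_i ∉ √I`. -/
def deltaOf (k : Type) [Field k] {n : ℕ} (I : Ideal (MvPolynomial (Fin n) k)) :
    Set (Finset (Fin n)) :=
  { F | (∏ i ∈ F, X i : MvPolynomial (Fin n) k) ∉ I.radical }

/-- For `a ∈ ℤ^n`, the simplicial complex `Δ_a(I)`: all `F` with `F ∩ G_a = ∅` (where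
`G_a = {i : a_i < 0}`) such that for every minimal monomial generator `x^b` of `I`
there is an index `i ∉ F ∪ G_a` with `b_i > a_i`. -/
def deltaAInt (k : Type) [Field k] {n : ℕ} (I : Ideal (MvPolynomial (Fin n) k))
    (a : Fin n → ℤ) : Set (Finset (Fin n)) :=
  { F | (∀ i ∈ F, 0 ≤ a i) ∧
    ∀ b : Fin n →₀ ℕ, IsMinimalGenerator k I b →
      ∃ i : Fin n, i ∉ F ∧ 0 ≤ a i ∧ a i < (b i : ℤ) }

/-!
If `F ∉ Δ(I)`, some power `(∏_{i ∈ F} x_i)^m` lies in `I`; it is a monomial supported on `F`,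
so by well-foundedness of divisibility it is divisible by a minimal generator `x^b` with
`b_i = 0` for all `i ∉ F`. Then no `i ∉ F` with `0 ≤ a_i` can satisfy `b_i > a_i`, so
`F ∉ Δ_a(I)`.
-/

theorem exists_isMinimalGenerator_le {k : Type} [Field k] {n : ℕ}
    {I : Ideal (MvPolynomial (Fin n) k)} {c : Fin n →₀ ℕ}
    (hc : (monomial c (1 : k) : MvPolynomial (Fin n) k) ∈ I) :
    ∃ b, IsMinimalGenerator k I b ∧ b ≤ c := by
  obtain ⟨b, ⟨hbc, hbI⟩, hmin⟩ := WellFounded.has_min wellFounded_lt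
    {c' : Fin n →₀ ℕ | c' ≤ c ∧ (monomial c' (1 : k) : MvPolynomial (Fin n) k) ∈ I} ⟨c, le_rfl, hc⟩
  refine ⟨b, ⟨hbI, fun c' hc'b hc'I => ?_⟩, hbc⟩
  by_contra hne
  exact hmin c' ⟨hc'b.trans hbc, hc'I⟩ (lt_of_le_of_ne hc'b hne)

theorem prod_X_eq_monomial_sum_single {k : Type} [CommSemiring k] {σ : Type*} (F : Finset σ) :
    (∏ i ∈ F, X i : MvPolynomial σ k) = monomial (∑ i ∈ F, Finsupp.single i 1) 1 :=
  (monomial_sum_one F _).symm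

theorem nsmul_sum_single_apply_of_notMem {σ : Type*} {F : Finset σ} {i : σ} (hi : i ∉ F)
    (m : ℕ) : (m • ∑ j ∈ F, Finsupp.single j 1 : σ →₀ ℕ) i = 0 := by
  rw [Finsupp.smul_apply, Finsupp.finsetSum_apply,
    Finset.sum_eq_zero fun j hj => Finsupp.single_eq_of_ne (ne_of_mem_of_not_mem hj hi).symm,
    smul_zero]

theorem stmt_12_general (k : Type) [Field k] (n : ℕ)
    (I : Ideal (MvPolynomial (Fin n) k))
    (a : Fin n → ℤ) :
    ∀ F : Finset (Fin n), F ∈ deltaAInt k I a → F ∈ deltaOf k I := by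
  rintro F ⟨-, hFgen⟩ ⟨m, hm⟩
  rw [prod_X_eq_monomial_sum_single, monomial_pow, one_pow] at hm
  obtain ⟨b, hb, hbc⟩ := exists_isMinimalGenerator_le hm
  obtain ⟨i, hiF, hai, habi⟩ := hFgen b hb
  have hbi : b i = 0 := Nat.le_zero.mp (nsmul_sum_single_apply_of_notMem hiF m ▸ hbc i)
  omega

/-- For a monomial ideal `I` and `a ∈ ℤ^n`, every face of `Δ_a(I)` is a face of
`Δ(I)`. -/
theorem stmt_12 (k : Type) [Field k] (n : ℕ)
    (I : Ideal (MvPolynomial (Fin n) k)) (hI : IsMonomialIdeal k I)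
    (a : Fin n → ℤ) :
    ∀ F : Finset (Fin n), F ∈ deltaAInt k I a → F ∈ deltaOf k I :=
  stmt_12_general k n I a
end

section
/- Let n ≥ 4. If G contains a triangle, i.e. three vertices that are pairwise adjacent in G, then I_G^{(m)} ≠ I_G^m for every m ≥ 2. -/
open MvPolynomial

/-!
Let `abc` be a triangle of `G` and `d` a fourth vertex. The monomial `(x_a x_b x_c)^(m-1) x_d`
lies in every `P_{ij}^m`: deleting two of its variables leaves degree at least `m`.
Give `x_a, x_b, x_c` weight 3, `x_d` weight 7 and every other variable weight 9. A monomial of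
`I_G` has, for each edge `{i,j}`, a variable outside `{i,j}` in its support; together with the
triangle and an edge at `d` this forces weight at least 9. Hence every monomial of `I_G^m` has
weight at least `9m`, while the monomial above has weight `9m - 2`.
-/

section WeightIdeal

variable (R : Type*) [CommSemiring R] {σ : Type*} (w : σ → ℕ)

def weightIdeal (N : ℕ) : Ideal (MvPolynomial σ R) where
  carrier := {f | ∀ v ∈ f.support, N ≤ Finsupp.weight w v}
  zero_mem' := by simp
  add_mem' {f g} hf hg v hv := by
    classical
    rcases Finset.mem_union.mp (Finsupp.support_add hv) with h | h
    exacts [hf v h, hg v h]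
  smul_mem' g f hf v hv := by
    classical
    obtain ⟨v₁, -, v₂, h₂, rfl⟩ := Finset.mem_add.mp (support_mul g f hv)
    rw [map_add]
    exact (hf v₂ h₂).trans (Nat.le_add_left _ _)

variable {R w}

theorem le_weight_of_monomial_mem_weightIdeal [Nontrivial R] {N : ℕ} {v : σ →₀ ℕ}
    (h : monomial v (1 : R) ∈ weightIdeal R w N) : N ≤ Finsupp.weight w v :=
  h v (by classical simp)

theorem weightIdeal_mul_le (A B : ℕ) :
    weightIdeal R w A * weightIdeal R w B ≤ weightIdeal R w (A + B) := by
  classical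
  rw [Ideal.mul_le]
  intro f hf g hg v hv
  obtain ⟨v₁, h₁, v₂, h₂, rfl⟩ := Finset.mem_add.mp (support_mul f g hv)
  rw [map_add]
  exact Nat.add_le_add (hf v₁ h₁) (hg v₂ h₂)

theorem pow_le_weightIdeal {I : Ideal (MvPolynomial σ R)} {N : ℕ} (hI : I ≤ weightIdeal R w N)
    (m : ℕ) : I ^ m ≤ weightIdeal R w (m * N) := by
  induction m with
  | zero => exact fun _ _ _ _ => by rw [zero_mul]; exact Nat.zero_le _
  | succ m ih =>
    rw [pow_succ, Nat.succ_mul]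
    exact (Ideal.mul_mono ih hI).trans (weightIdeal_mul_le _ _)

end WeightIdeal

theorem sum_le_weight {σ : Type*} (w : σ → ℕ) (v : σ →₀ ℕ) :
    ∑ t ∈ v.support, w t ≤ Finsupp.weight w v := by
  rw [Finsupp.weight_apply, Finsupp.sum]
  exact Finset.sum_le_sum fun t ht =>
    Nat.le_mul_of_pos_left _ (Nat.pos_of_ne_zero (Finsupp.mem_support_iff.mp ht))

theorem monomial_one_mem_pow_of_X_mem {σ R : Type*} [CommSemiring R] [Fintype σ]
    [DecidableEq σ] {P : Ideal (MvPolynomial σ R)} {s : Finset σ} (hs : ∀ t ∈ s, X t ∈ P)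
    {u : σ →₀ ℕ} {m : ℕ} (hm : m ≤ ∑ t ∈ s, u t) : monomial u (1 : R) ∈ P ^ m := by
  rw [monomial_eq, C_1, one_mul, Finsupp.prod_fintype _ _ (fun _ => pow_zero _),
    ← Finset.prod_mul_prod_compl s]
  refine Ideal.mul_mem_right _ _ (Ideal.pow_le_pow_right hm ?_)
  rw [← Finset.prod_pow_eq_pow_sum]
  exact Ideal.prod_mem_prod fun t ht => Ideal.pow_mem_pow (hs t ht) _

section Triangle

variable {σ : Type*} (a b c d : σ)

noncomputable def triangleMonomial (m : ℕ) : σ →₀ ℕ :=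
  Finsupp.single a (m - 1) + Finsupp.single b (m - 1) + Finsupp.single c (m - 1) +
    Finsupp.single d 1

theorem degree_triangleMonomial (m : ℕ) :
    (triangleMonomial a b c d m).degree = 3 * (m - 1) + 1 := by
  simp only [triangleMonomial, map_add, Finsupp.degree_single]
  ring

variable [DecidableEq σ]

def triangleWeight (t : σ) : ℕ :=
  if t = a ∨ t = b ∨ t = c then 3 else if t = d then 7 else 9

variable {a b c d}

theorem nine_le_sum_triangleWeight (G : SimpleGraph σ) (hab : G.Adj a b) (hbc : G.Adj b c)
    (hac : G.Adj a c) (hd : ∃ q, G.Adj d q) (hda : d ≠ a) (hdb : d ≠ b) (hdc : d ≠ c)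
    {S : Finset σ} (hS : ∀ i j, G.Adj i j → ∃ t ∈ S, t ≠ i ∧ t ≠ j) :
    9 ≤ ∑ t ∈ S, triangleWeight a b c d t := by
  have three_le : ∀ t, 3 ≤ triangleWeight a b c d t := by
    intro t; unfold triangleWeight; split_ifs <;> omega
  by_cases hout : ∃ t ∈ S, t ≠ a ∧ t ≠ b ∧ t ≠ c ∧ t ≠ d
  · obtain ⟨t, ht, hta, htb, htc, htd⟩ := hout
    refine le_of_eq_of_le ?_ (Finset.single_le_sum (fun _ _ => Nat.zero_le _) ht)
    simp [triangleWeight, hta, htb, htc, htd]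
  push Not at hout
  by_cases hdS : d ∈ S
  · obtain ⟨q, hq⟩ := hd
    obtain ⟨t, ht, htd, -⟩ := hS d q hq
    have hpair := Finset.sum_le_sum_of_subset (f := triangleWeight a b c d)
      (Finset.insert_subset hdS (Finset.singleton_subset_iff.mpr ht))
    rw [Finset.sum_pair htd.symm] at hpair
    have : triangleWeight a b c d d = 7 := by simp [triangleWeight, hda, hdb, hdc]
    linarith [three_le t]
  · have in_triangle : ∀ t ∈ S, t = a ∨ t = b ∨ t = c := fun t ht => by
      by_contra! h
      exact hdS (hout t ht h.1 h.2.1 h.2.2 ▸ ht)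
    have third_mem : ∀ i j k, G.Adj i j → ({i, j, k} : Finset σ) = {a, b, c} → k ∈ S := by
      intro i j k hij hijk
      obtain ⟨t, ht, hti, htj⟩ := hS i j hij
      have : t ∈ ({i, j, k} : Finset σ) := hijk ▸ by simpa using in_triangle t ht
      obtain rfl : t = k := by simpa [hti, htj] using this
      exact ht
    have hsub : {a, b, c} ⊆ S := by
      simp only [Finset.insert_subset_iff, Finset.singleton_subset_iff]
      exact ⟨third_mem b c a hbc (by grind), third_mem a c b hac (by grind),
        third_mem a b c hab rfl⟩
    refine le_of_eq_of_le ?_ (Finset.sum_le_sum_of_subset hsub)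
    rw [Finset.sum_insert (by simp [hab.ne, hac.ne]), Finset.sum_pair hbc.ne]
    simp [triangleWeight]

theorem triangleMonomial_apply_le {m : ℕ} (hm : 2 ≤ m) (hab : a ≠ b) (hbc : b ≠ c)
    (hac : a ≠ c) (hda : d ≠ a) (hdb : d ≠ b) (hdc : d ≠ c) (t : σ) :
    triangleMonomial a b c d m t ≤ m - 1 := by
  simp only [triangleMonomial, Finsupp.add_apply, Finsupp.single_apply]
  split_ifs <;> grind

theorem weight_triangleMonomial (m : ℕ) (hda : d ≠ a) (hdb : d ≠ b) (hdc : d ≠ c) :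
    Finsupp.weight (triangleWeight a b c d) (triangleMonomial a b c d m) = 9 * (m - 1) + 7 := by
  simp only [triangleMonomial, map_add, Finsupp.weight_single, triangleWeight, smul_eq_mul]
  simp [hda, hdb, hdc]
  ring

end Triangle

section SymbolicPower

variable {k : Type} [Field k] {n : ℕ}

theorem mem_varPrime {i j : Fin n} {f : MvPolynomial (Fin n) k} :
    f ∈ varPrime k i j ↔ ∀ v ∈ f.support, ∃ t ∈ {t | t ≠ i ∧ t ≠ j}, v t ≠ 0 :=
  mem_ideal_span_X_image

theorem mem_symbolicPower {G : SimpleGraph (Fin n)} {m : ℕ} {f : MvPolynomial (Fin n) k} :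
    f ∈ symbolicPower k G m ↔ ∀ i j, G.Adj i j → f ∈ varPrime k i j ^ m := by
  simp only [symbolicPower, Ideal.mem_iInf]

variable {a b c d : Fin n}

theorem symbolicPower_one_le_weightIdeal (G : SimpleGraph (Fin n))
    (hd : ∃ q, G.Adj d q) (hab : G.Adj a b) (hbc : G.Adj b c)
    (hac : G.Adj a c) (hda : d ≠ a) (hdb : d ≠ b) (hdc : d ≠ c) :
    symbolicPower k G 1 ≤ weightIdeal k (triangleWeight a b c d) 9 := by
  intro f hf v hv
  refine (nine_le_sum_triangleWeight G hab hbc hac hd hda hdb hdc fun i j hij => ?_).trans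
    (sum_le_weight _ v)
  have hfij : f ∈ varPrime k i j := pow_one (varPrime k i j) ▸ mem_symbolicPower.mp hf i j hij
  obtain ⟨t, ht, hvt⟩ := mem_varPrime.mp hfij v hv
  exact ⟨t, Finsupp.mem_support_iff.mpr hvt, ht⟩

theorem monomial_triangleMonomial_mem_symbolicPower (G : SimpleGraph (Fin n)) {m : ℕ}
    (hm : 2 ≤ m) (hab : a ≠ b) (hbc : b ≠ c) (hac : a ≠ c) (hda : d ≠ a) (hdb : d ≠ b)
    (hdc : d ≠ c) : monomial (triangleMonomial a b c d m) (1 : k) ∈ symbolicPower k G m := by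
  set u := triangleMonomial a b c d m
  refine mem_symbolicPower.mpr fun i j _ => monomial_one_mem_pow_of_X_mem (s := {i, j}ᶜ)
    (fun t ht => Ideal.subset_span (Set.mem_image_of_mem _ (by simpa [not_or] using ht))) ?_
  have htotal : ∑ t, u t = 3 * (m - 1) + 1 := by
    rw [← Finsupp.degree_eq_sum, degree_triangleMonomial]
  have hpair : ∑ t ∈ {i, j}, u t ≤ 2 * (m - 1) :=
    (Finset.sum_le_card_nsmul _ _ _ fun t _ =>
      triangleMonomial_apply_le hm hab hbc hac hda hdb hdc t).trans
      (Nat.mul_le_mul_right _ Finset.card_le_two)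
  rw [← Finset.sum_add_sum_compl {i, j}] at htotal
  omega

end SymbolicPower

/-- Let `n ≥ 4`. If `G` contains a triangle (three pairwise adjacent vertices), then
`I_G^{(m)} ≠ I_G^m` for every `m ≥ 2`. -/
theorem stmt_14 (k : Type) [Field k] (n : ℕ) (hn : 4 ≤ n)
    (G : SimpleGraph (Fin n)) (hG : ∀ v : Fin n, ∃ u : Fin n, G.Adj v u)
    (a b c : Fin n) (hab : G.Adj a b) (hbc : G.Adj b c) (hac : G.Adj a c)
    (m : ℕ) (hm : 2 ≤ m) :
    symbolicPower k G m ≠ (symbolicPower k G 1) ^ m := by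
  have hcard : ({a, b, c} : Finset (Fin n)).card < (Finset.univ : Finset (Fin n)).card := by
    rw [Finset.card_univ, Fintype.card_fin]
    exact Finset.card_le_three.trans_lt (by omega)
  obtain ⟨d, -, hd⟩ := Finset.exists_mem_notMem_of_card_lt_card hcard
  simp only [Finset.mem_insert, Finset.mem_singleton, not_or] at hd
  obtain ⟨hda, hdb, hdc⟩ := hd
  intro h
  have hmem := monomial_triangleMonomial_mem_symbolicPower (k := k) G hm hab.ne hbc.ne hac.ne
    hda hdb hdc
  rw [h] at hmem
  have hI : symbolicPower k G 1 ≤ weightIdeal k (triangleWeight a b c d) 9 :=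
    symbolicPower_one_le_weightIdeal G (hG d) hab hbc hac hda hdb hdc
  have hweight := le_weight_of_monomial_mem_weightIdeal (pow_le_weightIdeal hI m hmem)
  rw [weight_triangleMonomial m hda hdb hdc] at hweight
  omega
end

section
/- The ideal I_G = ⋂_{{i,j}∈G} P_{ij} is generated by the monomials x_i x_j, where {i,j} ranges over the non-edges of G (pairs of distinct vertices that are not adjacent in G), together with the monomials x_i x_j x_k, where {i,j,k} ranges over the triangles of G (triples of pairwise adjacent vertices). -/
/-!
`I_G` is a monomial ideal: a monomial lies in `P_{ab}` iff its support is not contained in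
`{a, b}`. So the monomials of `I_G` are those whose support `S` lies inside no edge. If such an
`S` is not a clique it contains a non-edge; if it is a clique, start from a vertex `t ∈ S`
(there is one, as some edge misses `S`), pick an edge `tu` at `t`, a vertex `s ∈ S` off `tu`,
and a vertex `r ∈ S` off the edge `ts`: then `t, s, r` is a triangle in `S`.
-/

open MvPolynomial

theorem SimpleGraph.exists_not_adj_or_triangle {V : Type*} [Nonempty V] (G : SimpleGraph V)
    (hG : ∀ v, ∃ u, G.Adj v u) {S : Set V} (hS : ∀ a b, G.Adj a b → ∃ t ∈ S, t ≠ a ∧ t ≠ b) :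
    (∃ i ∈ S, ∃ j ∈ S, i ≠ j ∧ ¬G.Adj i j) ∨
      ∃ i ∈ S, ∃ j ∈ S, ∃ l ∈ S, G.Adj i j ∧ G.Adj j l ∧ G.Adj i l := by
  by_cases hnonadj : ∃ i ∈ S, ∃ j ∈ S, i ≠ j ∧ ¬G.Adj i j
  · exact .inl hnonadj
  push Not at hnonadj
  obtain ⟨v, u, hvu⟩ : ∃ v u, G.Adj v u := ⟨_, hG (Classical.arbitrary V)⟩
  obtain ⟨t, ht, -⟩ := hS v u hvu
  obtain ⟨u', htu'⟩ := hG t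
  obtain ⟨s, hs, hst, -⟩ := hS t u' htu'
  have hts : G.Adj t s := hnonadj t ht s hs hst.symm
  obtain ⟨r, hr, hrt, hrs⟩ := hS t s hts
  exact .inr ⟨t, ht, s, hs, r, hr, hts, hnonadj s hs r hr hrs.symm, hnonadj t ht r hr hrt.symm⟩

theorem MvPolynomial.prod_X_dvd_monomial {σ R : Type*} [CommSemiring R] {s : Finset σ}
    {d : σ →₀ ℕ} (hd : ∀ i ∈ s, d i ≠ 0) (c : R) : (∏ i ∈ s, X i) ∣ monomial d c := by
  classical
  rw [show ∏ i ∈ s, (X i : MvPolynomial σ R) = monomial (∑ i ∈ s, Finsupp.single i 1) 1 from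
    (monomial_sum_one s _).symm, monomial_dvd_monomial]
  refine ⟨.inr fun t => ?_, one_dvd c⟩
  rw [Finsupp.finsetSum_apply]
  simp only [Finsupp.single_apply, Finset.sum_ite_eq']
  split_ifs with ht
  · exact Nat.one_le_iff_ne_zero.2 (hd t ht)
  · exact Nat.zero_le _

section SymbolicPower

variable {k : Type} [Field k] {n : ℕ} {G : SimpleGraph (Fin n)}

theorem mem_varPrime_iff {a b : Fin n} {p : MvPolynomial (Fin n) k} :
    p ∈ varPrime k a b ↔ ∀ d ∈ p.support, ∃ t, d t ≠ 0 ∧ t ≠ a ∧ t ≠ b := by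
  simp only [varPrime, mem_ideal_span_X_image, Set.mem_ofPred_eq]
  grind

theorem X_mem_varPrime {a b t : Fin n} (ha : t ≠ a) (hb : t ≠ b) :
    (X t : MvPolynomial (Fin n) k) ∈ varPrime k a b :=
  Ideal.subset_span ⟨t, ⟨ha, hb⟩, rfl⟩

theorem mem_symbolicPower_one_iff {p : MvPolynomial (Fin n) k} :
    p ∈ symbolicPower k G 1 ↔ ∀ a b, G.Adj a b → p ∈ varPrime k a b := by
  simp only [symbolicPower, pow_one, Ideal.mem_iInf]

theorem X_mul_X_mem_symbolicPower_one {i j : Fin n} (hij : i ≠ j) (h : ¬G.Adj i j) :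
    (X i * X j : MvPolynomial (Fin n) k) ∈ symbolicPower k G 1 := by
  refine mem_symbolicPower_one_iff.2 fun a b hab => ?_
  by_cases hi : i ≠ a ∧ i ≠ b
  · exact Ideal.mul_mem_right _ _ (X_mem_varPrime hi.1 hi.2)
  · have hj : j ≠ a ∧ j ≠ b := by grind [G.adj_symm]
    exact Ideal.mul_mem_left _ _ (X_mem_varPrime hj.1 hj.2)

theorem X_mul_X_mul_X_mem_symbolicPower_one {i j l : Fin n} (hij : i ≠ j) (hjl : j ≠ l)
    (hil : i ≠ l) : (X i * X j * X l : MvPolynomial (Fin n) k) ∈ symbolicPower k G 1 := by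
  refine mem_symbolicPower_one_iff.2 fun a b _ => ?_
  by_cases hi : i ≠ a ∧ i ≠ b
  · exact Ideal.mul_mem_right _ _ (Ideal.mul_mem_right _ _ (X_mem_varPrime hi.1 hi.2))
  by_cases hj : j ≠ a ∧ j ≠ b
  · exact Ideal.mul_mem_right _ _ (Ideal.mul_mem_left _ _ (X_mem_varPrime hj.1 hj.2))
  have hl : l ≠ a ∧ l ≠ b := by grind
  exact Ideal.mul_mem_left _ _ (X_mem_varPrime hl.1 hl.2)

theorem exists_ne_ne_of_mem_symbolicPower_one {f : MvPolynomial (Fin n) k}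
    (hf : f ∈ symbolicPower k G 1) {d : Fin n →₀ ℕ} (hd : d ∈ f.support) {a b : Fin n}
    (hab : G.Adj a b) : ∃ t, d t ≠ 0 ∧ t ≠ a ∧ t ≠ b :=
  mem_varPrime_iff.1 (mem_symbolicPower_one_iff.1 hf a b hab) d hd

end SymbolicPower

/-- The ideal `I_G = ⋂_{{i,j} ∈ G} P_{ij}` is generated by the monomials `x_i x_j`
for the non-edges `{i,j}` of `G` together with the monomials `x_i x_j x_l` for the
triangles `{i,j,l}` of `G`. -/
theorem stmt_17 (k : Type) [Field k] (n : ℕ) (hn : 3 ≤ n)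
    (G : SimpleGraph (Fin n)) (hG : ∀ v : Fin n, ∃ u : Fin n, G.Adj v u) :
    symbolicPower k G 1 =
      Ideal.span
        ({ p : MvPolynomial (Fin n) k | ∃ i j : Fin n, i ≠ j ∧ ¬ G.Adj i j ∧
            p = X i * X j } ∪
         { p : MvPolynomial (Fin n) k | ∃ i j l : Fin n, G.Adj i j ∧ G.Adj j l ∧
            G.Adj i l ∧ p = X i * X j * X l }) := by
  have : Nonempty (Fin n) := ⟨⟨0, by omega⟩⟩
  apply le_antisymm
  · intro f hf
    rw [f.as_sum]
    refine Ideal.sum_mem _ fun d hd => ?_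
    obtain ⟨i, hi, j, hj, hij, hnadj⟩ | ⟨i, hi, j, hj, l, hl, hij, hjl, hil⟩ :=
      G.exists_not_adj_or_triangle hG (S := {t | d t ≠ 0})
        fun a b hab => exists_ne_ne_of_mem_symbolicPower_one hf hd hab
    · refine Ideal.mem_of_dvd _ ?_ (Ideal.subset_span (.inl ⟨i, j, hij, hnadj, rfl⟩))
      rw [← Finset.prod_pair hij]
      exact prod_X_dvd_monomial (by simpa using ⟨hi, hj⟩) _
    · refine Ideal.mem_of_dvd _ ?_ (Ideal.subset_span (.inr ⟨i, j, l, hij, hjl, hil, rfl⟩))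
      rw [show X i * X j * X l = ∏ t ∈ {i, j, l}, (X t : MvPolynomial (Fin n) k) by
        simp [Finset.prod_insert, hij.ne, hil.ne, hjl.ne, mul_assoc]]
      exact prod_X_dvd_monomial (by simpa using ⟨hi, hj, hl⟩) _
  · rw [Ideal.span_le]
    rintro p (⟨i, j, hij, hnadj, rfl⟩ | ⟨i, j, l, hij, hjl, hil, rfl⟩)
    · exact X_mul_X_mem_symbolicPower_one hij hnadj
    · exact X_mul_X_mul_X_mem_symbolicPower_one hij.ne hjl.ne hil.ne
end
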